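/- arXiv:1907.01911 — 2 statements merged into one kernel-verified Lean document; each statement's English description precedes it below -/
import Mathlib

section
/- Let $(\eta_i)_{i\in\mathcal{I}}$ be real numbers indexed by a countable set such that for every $\varepsilon>0$ only finitely many satisfy $|\eta_i|\geq\varepsilon$, suppose $\sum_{i}\eta_i^2<\infty$ and the principal-value sum $S=\lim_{\varepsilon\downarrow 0}\sum_{|\eta_i|\geq\varepsilon}\eta_i$ exists. Then the partial products $\prod_{|\eta_i|\geq\varepsilon}(1-\eta_i z)$ converge locally uniformly on $\mathbb{C}$ as $\varepsilon\downarrow 0$ to an entire function $\Lambda$, and $\dot\Lambda(0)=-S$ and $\ddot\Lambda(0)=S^2-\sum_i\eta_i^2$. -/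
/-!
Split each factor as `1 - η z = E(η z) · exp (-η z)` with `E(w) = (1 - w) eʷ`. Since
`|E(w) - 1| ≤ 3 |w|²` for `|w| ≤ 1`, square summability makes `∏ E(ηᵢ z)` converge
unconditionally and locally uniformly, while the exponential factors multiply to
`exp (-z ∑_{|ηᵢ| ≥ ε} ηᵢ)`, which converges locally uniformly by the principal-value hypothesis.
The partial products are polynomials with first two coefficients `-∑ ηᵢ` and
`((∑ ηᵢ)² - ∑ ηᵢ²) / 2`, and by Weierstrass' theorem their derivatives at `0` converge to those
of the limit.
-/

open Filter Topology

open Set Polynomial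

theorem TendstoLocallyUniformly.comp_tendsto {ι κ α β : Type*} [TopologicalSpace α]
    [UniformSpace β] {F : ι → α → β} {f : α → β} {p : Filter ι}
    (h : TendstoLocallyUniformly F f p) {φ : κ → ι} {q : Filter κ} (hφ : Tendsto φ q p) :
    TendstoLocallyUniformly (F ∘ φ) f q :=
  fun u hu x => (h u hu x).imp fun _ ⟨ht, hev⟩ => ⟨ht, hφ.eventually hev⟩

theorem Continuous.tendstoLocallyUniformly_of_tendsto {κ α β E : Type*} [TopologicalSpace α]
    [TopologicalSpace β] [LocallyCompactSpace β] [UniformSpace E] {f : α → β → E}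
    (hf : Continuous (Function.uncurry f)) {φ : κ → α} {l : Filter κ} {q : α} (hφ : Tendsto φ l (𝓝 q)) :
    TendstoLocallyUniformly (fun n => f (φ n)) (f q) l := by
  rw [tendstoLocallyUniformly_iff_forall_isCompact]
  intro K hK u hu
  obtain ⟨v, hv, hvK⟩ := hK.mem_uniformity_of_prod hf.continuousOn (mem_univ q)
    (symm_le_uniformity hu)
  rw [nhdsWithin_univ] at hv
  filter_upwards [hφ hv] with n hn x hx using hvK _ hn x hx

section Weierstrass

variable {κ : Type*} {F : κ → ℂ → ℂ} {f : ℂ → ℂ} {l : Filter κ}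

theorem TendstoLocallyUniformly.differentiable [l.NeBot] (h : TendstoLocallyUniformly F f l)
    (hF : ∀ᶠ n in l, Differentiable ℂ (F n)) : Differentiable ℂ f :=
  differentiableOn_univ.1 <| (tendstoLocallyUniformlyOn_univ.2 h).differentiableOn
    (hF.mono fun _ h => h.differentiableOn) isOpen_univ

theorem TendstoLocallyUniformly.deriv (h : TendstoLocallyUniformly F f l)
    (hF : ∀ᶠ n in l, Differentiable ℂ (F n)) :
    TendstoLocallyUniformly (deriv ∘ F) (deriv f) l :=
  tendstoLocallyUniformlyOn_univ.1 <| (tendstoLocallyUniformlyOn_univ.2 h).deriv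
    (hF.mono fun _ h => h.differentiableOn) isOpen_univ

end Weierstrass

section PartialProducts

variable {ι 𝕜 : Type*} [NontriviallyNormedField 𝕜]

lemma Polynomial.coeff_prod_one_sub_C_mul_X {R : Type*} [CommRing R] (t : Finset ι)
    (a : ι → R) :
    (∏ i ∈ t, (1 - C (a i) * X)).coeff 0 = 1 ∧
      (∏ i ∈ t, (1 - C (a i) * X)).coeff 1 = -∑ i ∈ t, a i ∧
      2 * (∏ i ∈ t, (1 - C (a i) * X)).coeff 2 = (∑ i ∈ t, a i) ^ 2 - ∑ i ∈ t, a i ^ 2 := by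
  classical
  induction t using Finset.induction_on with
  | empty => simp [coeff_one]
  | insert j t hj ih =>
    obtain ⟨h0, h1, h2⟩ := ih
    simp only [Finset.prod_insert hj, Finset.sum_insert hj, sub_mul, one_mul, mul_assoc,
      coeff_sub, coeff_C_mul, coeff_X_mul_zero, coeff_X_mul _ 0, coeff_X_mul _ 1]
    refine ⟨by simp [h0], by simp [h0, h1]; ring, ?_⟩
    linear_combination h2 - 2 * a j * h1

lemma deriv_eval_eq_eval_derivative (Q : 𝕜[X]) :
    deriv (fun z => Q.eval z) = fun z => Q.derivative.eval z :=
  funext fun _ => Q.deriv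

lemma deriv_eval_zero_eq_coeff_one (Q : 𝕜[X]) : deriv (fun z => Q.eval z) 0 = Q.coeff 1 := by
  simp [← coeff_zero_eq_eval_zero, coeff_derivative]

lemma deriv_deriv_eval_zero_eq_coeff_two (Q : 𝕜[X]) :
    deriv (deriv fun z => Q.eval z) 0 = 2 * Q.coeff 2 := by
  simp [deriv_eval_eq_eval_derivative, ← coeff_zero_eq_eval_zero, coeff_derivative]
  ring

lemma deriv_prod_one_sub_mul_zero (t : Finset ι) (a : ι → 𝕜) :
    deriv (fun z => ∏ i ∈ t, (1 - a i * z)) 0 = -∑ i ∈ t, a i := by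
  simpa [eval_prod] using
    (deriv_eval_zero_eq_coeff_one (∏ i ∈ t, (1 - C (a i) * X))).trans (coeff_prod_one_sub_C_mul_X t a).2.1

lemma deriv_deriv_prod_one_sub_mul_zero (t : Finset ι) (a : ι → 𝕜) :
    deriv (deriv fun z => ∏ i ∈ t, (1 - a i * z)) 0 = (∑ i ∈ t, a i) ^ 2 - ∑ i ∈ t, a i ^ 2 := by
  simpa [eval_prod] using
    (deriv_deriv_eval_zero_eq_coeff_two (∏ i ∈ t, (1 - C (a i) * X))).trans
      (coeff_prod_one_sub_C_mul_X t a).2.2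

end PartialProducts

section WeierstrassFactor

open Complex

lemma norm_one_sub_mul_cexp_sub_one_le {w : ℂ} (hw : ‖w‖ ≤ 1) :
    ‖(1 - w) * cexp w - 1‖ ≤ 3 * ‖w‖ ^ 2 := by
  have h : (1 - w) * cexp w - 1 = (cexp w - 1 - w) - w * (cexp w - 1) := by ring
  calc ‖(1 - w) * cexp w - 1‖ ≤ ‖cexp w - 1 - w‖ + ‖w‖ * ‖cexp w - 1‖ := by
        rw [h, ← norm_mul]; exact norm_sub_le _ _
    _ ≤ ‖w‖ ^ 2 + ‖w‖ * (2 * ‖w‖) := by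
        gcongr
        exacts [norm_exp_sub_one_sub_id_le hw, norm_exp_sub_one_le hw]
    _ = 3 * ‖w‖ ^ 2 := by ring

lemma hasProdLocallyUniformly_one_sub_mul_cexp {ι : Type*} {a : ι → ℂ}
    (ha : Summable fun i => ‖a i‖ ^ 2) :
    HasProdLocallyUniformly (fun i z => (1 - a i * z) * cexp (a i * z))
      (fun z => ∏' i, (1 - a i * z) * cexp (a i * z)) := by
  refine hasProdLocallyUniformly_of_forall_compact fun K hK => ?_
  obtain ⟨R, hR⟩ := hK.isBounded.subset_closedBall 0
  have ha0 : Tendsto (fun i => ‖a i‖ * R) cofinite (𝓝 0) := by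
    simpa using ((ha.tendsto_cofinite_zero).sqrt.mul_const R)
  have hbound : ∀ᶠ i in cofinite, ∀ z ∈ K,
      ‖(1 - a i * z) * cexp (a i * z) - 1‖ ≤ 3 * R ^ 2 * ‖a i‖ ^ 2 := by
    filter_upwards [ha0.eventually_le_const zero_lt_one] with i hi z hz
    have hz : ‖z‖ ≤ R := mem_closedBall_zero_iff.1 (hR hz)
    have hw : ‖a i * z‖ ≤ ‖a i‖ * R := by
      rw [norm_mul]; exact mul_le_mul_of_nonneg_left hz (norm_nonneg _)
    calc _ ≤ 3 * ‖a i * z‖ ^ 2 := norm_one_sub_mul_cexp_sub_one_le (hw.trans hi)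
      _ ≤ 3 * (‖a i‖ * R) ^ 2 := by gcongr
      _ = 3 * R ^ 2 * ‖a i‖ ^ 2 := by ring
  simpa using Summable.hasProdUniformlyOn_one_add hK (ha.mul_left (3 * R ^ 2)) hbound
    fun i => by fun_prop

lemma prod_one_sub_mul_eq_mul_cexp {ι : Type*} (t : Finset ι) (a : ι → ℂ) (z : ℂ) :
    ∏ i ∈ t, (1 - a i * z) =
      (∏ i ∈ t, (1 - a i * z) * cexp (a i * z)) * cexp (-(∑ i ∈ t, a i) * z) := by
  rw [Finset.prod_mul_distrib, ← exp_sum, mul_assoc, ← exp_add, neg_mul, Finset.sum_mul,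
    add_neg_cancel, exp_zero, mul_one]

end WeierstrassFactor

section Cutoff

variable {ι : Type*}

open scoped Classical in
/-- `{i | ε ≤ |η i|}` as a finset, with junk value `∅` when that set is infinite. -/
noncomputable def cutoff (η : ι → ℝ) (ε : ℝ) : Finset ι :=
  if h : {i | ε ≤ |η i|}.Finite then h.toFinset else ∅

variable {η : ι → ℝ}

lemma mem_cutoff {ε : ℝ} (h : {i | ε ≤ |η i|}.Finite) {i : ι} :
    i ∈ cutoff η ε ↔ ε ≤ |η i| := by
  simp [cutoff, h]

@[to_additive]
lemma tprod_ite_eq_prod_cutoff {M : Type*} [CommMonoid M] [TopologicalSpace M]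
    (hfin : ∀ ε : ℝ, 0 < ε → {i : ι | ε ≤ |η i|}.Finite) {ε : ℝ} (hε : 0 < ε) (f : ι → M) :
    ∏' i, (if ε ≤ |η i| then f i else 1) = ∏ i ∈ cutoff η ε, f i := by
  rw [tprod_eq_prod fun i hi => if_neg fun h => hi ((mem_cutoff (hfin ε hε)).2 h)]
  exact Finset.prod_congr rfl fun i hi => if_pos ((mem_cutoff (hfin ε hε)).1 hi)

/-- Indices with `η i = 0` never enter a cutoff, so the cutoffs exhaust `ι` only modulo them. -/
lemma tendsto_cutoff (hfin : ∀ ε : ℝ, 0 < ε → {i : ι | ε ≤ |η i|}.Finite) :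
    Tendsto (cutoff η) (𝓝[>] 0) (atTop.map (Finset.filter fun i => η i ≠ 0)) := by
  classical
  intro U hU
  obtain ⟨t₀, ht₀⟩ := mem_atTop_sets.1 (mem_map.1 hU)
  have hlarge : ∀ᶠ ε in 𝓝[>] (0 : ℝ), ∀ i ∈ t₀, η i ≠ 0 → ε ≤ |η i| :=
    (t₀.eventually_all).2 fun i _ => by
      by_cases hi : η i = 0
      · simp [hi]
      · exact (eventually_nhdsWithin_of_eventually_nhds
          (eventually_le_nhds (abs_pos.2 hi))).mono fun _ h _ => h
  rw [mem_map]
  filter_upwards [hlarge, self_mem_nhdsWithin] with ε hε (hε0 : 0 < ε)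
  have hne : ∀ i ∈ cutoff η ε, η i ≠ 0 := fun i hi =>
    abs_pos.1 (hε0.trans_le ((mem_cutoff (hfin ε hε0)).1 hi))
  have hfilter : (cutoff η ε ∪ t₀).filter (fun i => η i ≠ 0) = cutoff η ε := by
    ext i
    simp only [Finset.mem_filter, Finset.mem_union]
    exact ⟨fun ⟨h, hi⟩ => h.elim id fun h => (mem_cutoff (hfin ε hε0)).2 (hε i h hi),
      fun h => ⟨.inl h, hne i h⟩⟩
  rw [mem_preimage, ← hfilter]
  exact ht₀ _ Finset.subset_union_right

lemma tendsto_sum_cutoff (hfin : ∀ ε : ℝ, 0 < ε → {i : ι | ε ≤ |η i|}.Finite) {S : ℝ}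
    (hS : Tendsto (fun ε : ℝ => ∑' i : ι, if ε ≤ |η i| then η i else 0) (𝓝[>] 0) (𝓝 S)) :
    Tendsto (fun ε => ∑ i ∈ cutoff η ε, η i) (𝓝[>] 0) (𝓝 S) :=
  hS.congr' <| eventually_mem_nhdsWithin.mono fun _ (hε : 0 < _) =>
    tsum_ite_eq_sum_cutoff hfin hε η

lemma tendsto_sum_cutoff_sq (hfin : ∀ ε : ℝ, 0 < ε → {i : ι | ε ≤ |η i|}.Finite)
    (hsq : Summable fun i => η i ^ 2) :
    Tendsto (fun ε => ∑ i ∈ cutoff η ε, η i ^ 2) (𝓝[>] 0) (𝓝 (∑' i, η i ^ 2)) := by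
  refine ((tendsto_map'_iff (f := fun t : Finset ι => ∑ i ∈ t, η i ^ 2)).2 ?_).comp
    (tendsto_cutoff hfin)
  refine hsq.hasSum.congr fun t => (Finset.sum_filter_of_ne fun i _ h => ?_).symm
  simpa using h

open Complex in
lemma tendstoLocallyUniformly_prod_cutoff
    (hfin : ∀ ε : ℝ, 0 < ε → {i : ι | ε ≤ |η i|}.Finite) (hsq : Summable fun i => η i ^ 2)
    {S : ℝ} (hS : Tendsto (fun ε => ∑ i ∈ cutoff η ε, η i) (𝓝[>] 0) (𝓝 S)) :
    TendstoLocallyUniformly (fun ε z => ∏ i ∈ cutoff η ε, (1 - (η i : ℂ) * z))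
      (fun z => (∏' i, (1 - (η i : ℂ) * z) * cexp (η i * z)) * cexp (-S * z)) (𝓝[>] 0) := by
  have hE := hasProdLocallyUniformly_one_sub_mul_cexp (a := fun i => (η i : ℂ))
    (by simpa using hsq)
  have hE' : TendstoLocallyUniformly (fun t z => ∏ i ∈ t, (1 - (η i : ℂ) * z) * cexp (η i * z))
      (fun z => ∏' i, (1 - (η i : ℂ) * z) * cexp (η i * z))
      (atTop.map (Finset.filter fun i => η i ≠ 0)) :=
    -- convergence along a mapped filter is convergence of the composite, by definition
    hE.congr fun t z => (Finset.prod_filter_of_ne fun i _ h => by contrapose! h; simp [h]).symm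
  have hexp := Continuous.tendstoLocallyUniformly_of_tendsto (f := fun s z : ℂ => cexp (-s * z))
    (by fun_prop) ((continuous_ofReal.tendsto S).comp hS)
  refine ((hE'.comp_tendsto (tendsto_cutoff hfin)).mul₀ hexp
    (hE.continuous (.of_forall fun t => by fun_prop)) (by fun_prop)).congr fun ε z => ?_
  simp [prod_one_sub_mul_eq_mul_cexp (cutoff η ε) (fun i => (η i : ℂ)) z]

end Cutoff

theorem stmt0_general {ι : Type*} (η : ι → ℝ)
    (hfin : ∀ ε : ℝ, 0 < ε → {i : ι | ε ≤ |η i|}.Finite)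
    (hsq : Summable fun i => (η i) ^ 2) (S : ℝ)
    (hS : Tendsto (fun ε : ℝ => ∑' i : ι, if ε ≤ |η i| then η i else 0)
      (𝓝[>] (0 : ℝ)) (𝓝 S)) :
    ∃ Λ : ℂ → ℂ, (∀ z, DifferentiableAt ℂ Λ z) ∧
      TendstoLocallyUniformly
        (fun (ε : ℝ) (z : ℂ) => ∏' i : ι, if ε ≤ |η i| then 1 - (η i : ℂ) * z else 1)
        Λ (𝓝[>] (0 : ℝ)) ∧
      deriv Λ 0 = -(S : ℂ) ∧
      deriv (deriv Λ) 0 = (S : ℂ) ^ 2 - ((∑' i : ι, (η i) ^ 2 : ℝ) : ℂ) := by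
  have hsum := tendsto_sum_cutoff hfin hS
  have hP := tendstoLocallyUniformly_prod_cutoff hfin hsq hsum
  have hPd : ∀ ε, Differentiable ℂ fun z => ∏ i ∈ cutoff η ε, (1 - (η i : ℂ) * z) :=
    fun ε => by fun_prop
  have hd1 := hP.deriv (.of_forall hPd)
  have hd2 := hd1.deriv (.of_forall fun ε => (hPd ε).deriv)
  have hsumC := (Complex.continuous_ofReal.tendsto S).comp hsum
  have hsqC := (Complex.continuous_ofReal.tendsto _).comp (tendsto_sum_cutoff_sq hfin hsq)
  refine ⟨_, hP.differentiable (.of_forall hPd), hP.congr_inseparable ?_, ?_, ?_⟩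
  · filter_upwards [self_mem_nhdsWithin] with ε (hε : 0 < ε) z
    exact .of_eq (tprod_ite_eq_prod_cutoff hfin hε _).symm
  · refine tendsto_nhds_unique (tendstoLocallyUniformlyOn_univ.2 hd1 |>.tendsto_at (mem_univ 0))
      (hsumC.neg.congr fun ε => ?_)
    simp [deriv_prod_one_sub_mul_zero]
  · refine tendsto_nhds_unique (tendstoLocallyUniformlyOn_univ.2 hd2 |>.tendsto_at (mem_univ 0))
      ((hsumC.pow 2).sub hsqC |>.congr fun ε => ?_)
    simp [deriv_deriv_prod_one_sub_mul_zero]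

/-- Principal-value sums and products: locally uniform convergence of the partial
products and the values of the first two derivatives of the limit at `0`. -/
theorem stmt0 {ι : Type*} [Countable ι] (η : ι → ℝ)
    (hfin : ∀ ε : ℝ, 0 < ε → {i : ι | ε ≤ |η i|}.Finite)
    (hsq : Summable fun i => (η i) ^ 2) (S : ℝ)
    (hS : Tendsto (fun ε : ℝ => ∑' i : ι, if ε ≤ |η i| then η i else 0)
      (𝓝[>] (0 : ℝ)) (𝓝 S)) :
    ∃ Λ : ℂ → ℂ, (∀ z, DifferentiableAt ℂ Λ z) ∧
      TendstoLocallyUniformly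
        (fun (ε : ℝ) (z : ℂ) => ∏' i : ι, if ε ≤ |η i| then 1 - (η i : ℂ) * z else 1)
        Λ (𝓝[>] (0 : ℝ)) ∧
      deriv Λ 0 = -(S : ℂ) ∧
      deriv (deriv Λ) 0 = (S : ℂ) ^ 2 - ((∑' i : ι, (η i) ^ 2 : ℝ) : ℂ) :=
  stmt0_general η hfin hsq S hS
end

section
/- Let $\nu$ be a Borel measure on an interval $I\subseteq\mathbb{R}$, let $g$ be a left-continuous distribution function of $\nu$ (i.e. $g(y)-g(x)=\nu([x,y))$ for $x\leq y$), and let $f$ be locally absolutely continuous on $I$. Then for all $x,y\in I$ with $x\leq y$: $\int_{[x,y)} f\,d\nu = g(y)f(y)-g(x)f(x) - \int_x^y g(\xi)f'(\xi)\,d\xi$. -/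
/-!
Writing `f t = f y - ∫ s in t..y, f' s`, the integral `∫_{[x,y)} (f y - f t) dν(t)` becomes the
integral of `f' s` over the triangle `x ≤ t < s ≤ y` against `ν ⊗ volume`. Integrating in `t`
first instead gives `∫_x^y ν([x,s)) f'(s) ds = ∫_x^y (g s - g x) f'(s) ds`.
-/

open MeasureTheory Set

theorem setIntegral_Ico_intervalIntegral_swap {ν : Measure ℝ} {φ : ℝ → ℝ} {a b : ℝ}
    (hab : a ≤ b) (hν : ν (Ico a b) ≠ ⊤) (hφ : IntegrableOn φ (Ioc a b)) :
    ∫ t in Ico a b, (∫ s in t..b, φ s) ∂ν = ∫ s in a..b, ν.real (Ico a s) * φ s := by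
  have : IsFiniteMeasure (ν.restrict (Ico a b)) := isFiniteMeasure_restrict.2 hν
  set F : ℝ × ℝ → ℝ := {p | p.1 < p.2}.indicator fun p => φ p.2
  have hF : Integrable F ((ν.restrict (Ico a b)).prod (volume.restrict (Ioc a b))) :=
    (hφ.comp_snd _).indicator (measurableSet_lt measurable_fst measurable_snd)
  calc ∫ t in Ico a b, (∫ s in t..b, φ s) ∂ν
      = ∫ t in Ico a b, (∫ s in Ioc a b, F (t, s)) ∂ν := by
        refine setIntegral_congr_fun measurableSet_Ico fun t ht => ?_
        have hF_t : (fun s => F (t, s)) = (Ioi t).indicator φ := by ext s; simp [F, indicator_apply]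
        simp only [hF_t, integral_indicator measurableSet_Ioi,
          Measure.restrict_restrict measurableSet_Ioi, intervalIntegral.integral_of_le ht.2.le,
          inter_comm, Ioc_inter_Ioi, sup_eq_right.2 ht.1]
    _ = ∫ s in Ioc a b, ∫ t in Ico a b, F (t, s) ∂ν := integral_integral_swap hF
    _ = ∫ s in a..b, ν.real (Ico a s) * φ s := by
        rw [intervalIntegral.integral_of_le hab]
        refine setIntegral_congr_fun measurableSet_Ioc fun s hs => ?_
        have hF_s : (fun t => F (t, s)) = (Iio s).indicator fun _ => φ s := by
          ext t; simp [F, indicator_apply]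
        simp only [hF_s, integral_indicator measurableSet_Iio, setIntegral_const,
          measureReal_restrict_apply measurableSet_Iio, inter_comm, Ico_inter_Iio,
          min_eq_right hs.2, smul_eq_mul]

theorem Monotone.intervalIntegrable_mul {g φ : ℝ → ℝ} {a b : ℝ} (hg : Monotone g)
    (hφ : IntervalIntegrable φ volume a b) :
    IntervalIntegrable (fun t => g t * φ t) volume a b := by
  rw [intervalIntegrable_iff] at hφ ⊢
  refine hφ.bdd_mul (c := max |g (min a b)| |g (max a b)|) hg.measurable.aestronglyMeasurable ?_
  filter_upwards [ae_restrict_mem measurableSet_uIoc] with t ht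
  exact abs_le_max_abs_abs (hg ht.1.le) (hg ht.2)

theorem continuous_of_forall_sub_eq_intervalIntegral {f f' : ℝ → ℝ}
    (hf' : LocallyIntegrable f') (hf : ∀ a b, f b - f a = ∫ t in a..b, f' t) : Continuous f := by
  have hf_eq : f = fun b => f 0 + ∫ t in 0..b, f' t := funext fun b => by linarith [hf 0 b]
  rw [hf_eq]
  exact continuous_const.add (intervalIntegral.continuous_primitive
    (fun a b => (hf'.integrableOn_isCompact isCompact_uIcc).intervalIntegrable) 0)

theorem stmt1_general (ν : Measure ℝ) [IsLocallyFiniteMeasure ν]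
    (g f f' : ℝ → ℝ)
    (hg : ∀ x y : ℝ, x ≤ y → g y - g x = (ν (Set.Ico x y)).toReal)
    (hf : ∀ x y : ℝ, f y - f x = ∫ t in x..y, f' t)
    (hf' : LocallyIntegrable f' volume)
    (x y : ℝ) (hxy : x ≤ y) :
    ∫ t in Set.Ico x y, f t ∂ν
      = g y * f y - g x * f x - ∫ t in x..y, g t * f' t := by
  have hν : ν (Ico x y) ≠ ⊤ :=
    ((measure_mono Ico_subset_Icc_self).trans_lt isCompact_Icc.measure_lt_top).ne
  have hf'_int : IntervalIntegrable f' volume x y :=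
    (hf'.integrableOn_isCompact isCompact_uIcc).intervalIntegrable
  have hg_mono : Monotone g := fun a b hab => sub_nonneg.1 (hg a b hab ▸ ENNReal.toReal_nonneg)
  have hf_int : IntegrableOn f (Ico x y) ν :=
    (continuous_of_forall_sub_eq_intervalIntegral hf' hf).integrableOn_Icc.mono_set
      Ico_subset_Icc_self
  have hparts : ∫ t in Ico x y, (f y - f t) ∂ν = ∫ s in x..y, (g s - g x) * f' s :=
    calc ∫ t in Ico x y, (f y - f t) ∂ν = ∫ t in Ico x y, (∫ s in t..y, f' s) ∂ν := by
          simp only [hf]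
      _ = ∫ s in x..y, ν.real (Ico x s) * f' s :=
          setIntegral_Ico_intervalIntegral_swap hxy hν
            ((intervalIntegrable_iff_integrableOn_Ioc_of_le hxy).1 hf'_int)
      _ = ∫ s in x..y, (g s - g x) * f' s :=
          intervalIntegral.integral_congr_ae (.of_forall fun s hs => by
            rw [uIoc_of_le hxy] at hs
            rw [measureReal_def, ← hg x s hs.1.le])
  rw [integral_sub (integrableOn_const (C := f y) hν) hf_int, setIntegral_const, measureReal_def,
    ← hg x y hxy, smul_eq_mul] at hparts
  simp only [sub_mul] at hparts
  rw [intervalIntegral.integral_sub (hg_mono.intervalIntegrable_mul hf'_int)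
    (hf'_int.const_mul (g x)), intervalIntegral.integral_const_mul, ← hf x y] at hparts
  linarith

/-- Integration by parts: if `g` is a left-continuous distribution function of the
Borel measure `ν` and `f` is (locally) absolutely continuous with derivative `f'`,
then `∫_{[x,y)} f dν = g(y)f(y) - g(x)f(x) - ∫_x^y g f'`. -/
theorem stmt1 (ν : Measure ℝ) [IsLocallyFiniteMeasure ν]
    (g f f' : ℝ → ℝ)
    (hg : ∀ x y : ℝ, x ≤ y → g y - g x = (ν (Set.Ico x y)).toReal)
    (hf : ∀ x y : ℝ, f y - f x = ∫ t in x..y, f' t)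
    (hf' : LocallyIntegrable f' volume)
    (x y : ℝ) (hxy : x ≤ y)
    (hint : IntegrableOn f (Set.Ico x y) ν)
    (hint2 : IntervalIntegrable (fun t => g t * f' t) volume x y) :
    ∫ t in Set.Ico x y, f t ∂ν
      = g y * f y - g x * f x - ∫ t in x..y, g t * f' t :=
  stmt1_general ν g f f' hg hf hf' x y hxy
end
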